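/- Under the dilation q → q⁴, a → aq⁻³, b → bq⁻¹, the colored ordering 1_{ab} < 1_a < 1_{b²} < 1_b < 2_{ab} < 2_a < 3_{a²} < 2_b < 3_{ab} < 3_a < 3_{b²} < 3_b < ⋯ is mapped to the natural ordering of nonnegative integers 0_{ab} < 1_a < 2_{b²} < 3_b < 4_{ab} < 5_a < 6_{a²} < 7_b < 8_{ab} < 9_a < 10_{b²} < 11_b < ⋯; that is, the dilation map sending a colored integer k_c to 4k minus (3 times the number of a's in c plus the number of b's in c) is strictly increasing with respect to the two orderings. -/

import Mathlib

/-- The five colours a, b, ab, a², b². -/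
inductive Col where
  | a | b | ab | aa | bb
deriving DecidableEq, Inhabited

/-- A valid coloured integer: positive, squared colours only on odd integers
(parts coloured a² are at least 3, the smallest one in the ordering being 3_{a²}). -/
def ValidCol : ℕ × Col → Prop
  | (k, Col.aa) => k % 2 = 1 ∧ 3 ≤ k
  | (k, Col.bb) => k % 2 = 1 ∧ 1 ≤ k
  | (k, _) => 1 ≤ k

/-- The position of a coloured integer in the ordering
1_{ab} < 1_a < 1_{b²} < 1_b < 2_{ab} < 2_a < 3_{a²} < 2_b < 3_{ab} < 3_a < 3_{b²} < 3_b < ⋯,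
where the m-th block (m ≥ 1) consists of m_{ab}, m_a, then m_{b²} if m is odd or
(m+1)_{a²} if m is even, then m_b. -/
def colOrderPos : ℕ × Col → ℕ
  | (k, Col.ab) => 4 * (k - 1)
  | (k, Col.a)  => 4 * (k - 1) + 1
  | (k, Col.bb) => 4 * (k - 1) + 2
  | (k, Col.aa) => 4 * ((k - 1) - 1) + 2
  | (k, Col.b)  => 4 * (k - 1) + 3

/-- The dilation q → q⁴, a → aq⁻³, b → bq⁻¹: it sends k_c to 4k minus
(3 times the number of a's plus the number of b's in the colour c), i.e.
k_a ↦ 4k−3, k_b ↦ 4k−1, k_{ab} ↦ 4k−4, k_{a²} ↦ 4k−6, k_{b²} ↦ 4k−2. -/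
def dilation : ℕ × Col → ℕ
  | (k, Col.a)  => 4 * k - 3
  | (k, Col.b)  => 4 * k - 1
  | (k, Col.ab) => 4 * k - 4
  | (k, Col.aa) => 4 * k - 6
  | (k, Col.bb) => 4 * k - 2

-- Away from the truncated subtractions, which validity excludes, both sides are the same
-- affine function of `k` for each colour.
theorem dilation_eq_colOrderPos {x : ℕ × Col} (hx : ValidCol x) :
    dilation x = colOrderPos x := by
  rcases x with ⟨k, _ | _ | _ | _ | _⟩ <;>
    simp only [ValidCol, dilation, colOrderPos] at hx ⊢ <;> omega

/-- The dilation map is strictly increasing from the coloured ordering to the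
natural ordering of the nonnegative integers. -/
theorem dilation_strictly_increasing (x y : ℕ × Col)
    (hx : ValidCol x) (hy : ValidCol y) :
    colOrderPos x < colOrderPos y ↔ dilation x < dilation y := by
  rw [dilation_eq_colOrderPos hx, dilation_eq_colOrderPos hy]
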